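/- arXiv:2209.04413 — 7 statements merged into one kernel-verified Lean document; each statement's English description precedes it below -/
import Mathlib

section
/- The polynomial P(x1,...,x5) = x1·x2·x3 + x2·x3·x4 + x3·x4·x5 + x4·x5·x1 + x5·x1·x2 is not real stable: there exist complex numbers z1,...,z5, all with strictly positive imaginary part, at which P vanishes. -/
open MvPolynomial Complex

/-- A real polynomial is real stable if it does not vanish when all
variables lie in the open upper half-plane. -/
def RealStable {σ : Type*} (P : MvPolynomial σ ℝ) : Prop :=
  ∀ z : σ → ℂ, (∀ i, 0 < (z i).im) → MvPolynomial.aeval z P ≠ 0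

/-! On points of the form `(a, b, c, b, a)` the polynomial factors as
`b * (c * (2a + b) + 2a²)`, so it vanishes at `c = -2a² / (2a + b)`. Taking `a = 1 + i` and
`b = -3 + i` gives `c = (-6 + 2i) / 5`, which again lies in the upper half-plane. -/

lemma aeval_cycleSpanning_palindrome (a b c : ℂ) :
    MvPolynomial.aeval ![a, b, c, b, a]
        ((X 0 * X 1 * X 2 + X 1 * X 2 * X 3 + X 2 * X 3 * X 4
          + X 3 * X 4 * X 0 + X 4 * X 0 * X 1 : MvPolynomial (Fin 5) ℝ)) =
      b * (c * (2 * a + b) + 2 * a ^ 2) := by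
  simp only [map_add, map_mul, aeval_X, Matrix.cons_val_zero, Matrix.cons_val_one,
    Matrix.cons_val_two, Matrix.cons_val_three, Matrix.cons_val_four, Matrix.head_cons,
    Matrix.tail_cons]
  ring

/-- The vertex spanning polynomial of the 5-cycle,
P = x1 x2 x3 + x2 x3 x4 + x3 x4 x5 + x4 x5 x1 + x5 x1 x2, is not real stable. -/
theorem stmt0 :
    ∃ z : Fin 5 → ℂ, (∀ i, 0 < (z i).im) ∧
      MvPolynomial.aeval z
        ((X 0 * X 1 * X 2 + X 1 * X 2 * X 3 + X 2 * X 3 * X 4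
          + X 3 * X 4 * X 0 + X 4 * X 0 * X 1 : MvPolynomial (Fin 5) ℝ)) = 0 := by
  refine ⟨![1 + I, -3 + I, (-6 + 2 * I) / 5, -3 + I, 1 + I], ?_, ?_⟩
  · intro i
    fin_cases i <;> simp
  · have hc : (-6 + 2 * I) / 5 * (2 * (1 + I) + (-3 + I)) + 2 * (1 + I) ^ 2 = 0 := by
      linear_combination (16 / 5 : ℂ) * I_sq
    rw [aeval_cycleSpanning_palindrome, hc, mul_zero]
end

section
/- If P(x1,...,xn) is real stable and d is the degree of P in the variable x1, then the polynomial x1^d · P(−1/x1, x2, ..., xn) is either identically zero or real stable. -/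
open MvPolynomial Complex

theorem Complex.im_neg_inv_pos {z : ℂ} (hz : 0 < z.im) : 0 < (-z⁻¹).im := by
  rw [neg_inv]
  exact UpperHalfPlane.im_inv_neg_coe_pos ⟨z, hz⟩

theorem RealStable.aeval_update_neg_inv_ne_zero {σ : Type*} [DecidableEq σ]
    {P : MvPolynomial σ ℝ} (hP : RealStable P) {z : σ → ℂ} (hz : ∀ i, 0 < (z i).im) (j : σ) :
    aeval (Function.update z j (-(z j)⁻¹)) P ≠ 0 :=
  hP _ <| (Function.forall_update_iff z fun _ w => 0 < w.im).mpr
    ⟨im_neg_inv_pos (hz j), fun i _ => hz i⟩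

/-- If `P` is real stable, `d` is the degree of `P` in the variable `x₀`, and `Q` is the
polynomial `x₀ ^ d * P (-1/x₀, x₁, …)` (expressed via its values on points with `z₀ ≠ 0`),
then `Q` is identically zero or real stable. -/
theorem stmt2 {n : ℕ} (P Q : MvPolynomial (Fin (n + 1)) ℝ) (hP : RealStable P)
    (hQ : ∀ z : Fin (n + 1) → ℂ, z 0 ≠ 0 →
      MvPolynomial.aeval z Q
        = (z 0) ^ (P.degreeOf 0) *
          MvPolynomial.aeval (Function.update z 0 (-(z 0)⁻¹)) P) :
    Q = 0 ∨ RealStable Q := by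
  refine Or.inr fun z hz => ?_
  have hz0 : z 0 ≠ 0 := fun h => (hz 0).ne' (by simp [h])
  rw [hQ z hz0]
  exact mul_ne_zero (pow_ne_zero _ hz0) (hP.aeval_update_neg_inv_ne_zero hz 0)
end

section
/- The polynomial Q(x1,...,xn) = Σ_{i=1}^{n} x_i·x_{i+1} (indices mod n, with x_{n+1} = x_1), for n ≥ 6, is not real stable. -/
open MvPolynomial Complex Finset

/-!
Evaluating at `z k = a k + i` with `a` real gives
`Q(z) = (∑ a_k a_{k+1} - n) + 2 i ∑ a_k`, so it suffices to find a real vector with zero sum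
whose cyclic adjacent products sum to `n`. For `n ≥ 6` the vector `(0, t, t, 0, -t, -t, 0, …, 0)`
with `2 t² = n` does: the zeros isolate the two blocks `t, t` and `-t, -t`, so only the two
products inside the blocks survive, also across the wrap-around from `n - 1` to `0`.
-/

theorem aeval_cycle_ofReal_add_I {n : ℕ} [NeZero n] (a : Fin n → ℝ) :
    aeval (fun k => (a k : ℂ) + I) (∑ i : Fin n, (X i * X (i + 1) : MvPolynomial (Fin n) ℝ)) =
      ((∑ i, a i * a (i + 1) - n : ℝ) : ℂ) + ((2 * ∑ i, a i : ℝ) : ℂ) * I := by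
  have hshift : ∑ i, a (i + 1) = ∑ i, a i :=
    Fintype.sum_equiv (Equiv.addRight 1) _ _ fun _ => rfl
  have hexpand : ∀ i, ((a i : ℂ) + I) * ((a (i + 1) : ℂ) + I) =
      ((a i * a (i + 1) - 1 : ℝ) : ℂ) + ((a i + a (i + 1) : ℝ) : ℂ) * I := fun i => by
    push_cast
    linear_combination I_mul_I
  simp only [map_sum, map_mul, aeval_X, hexpand, sum_add_distrib, ← sum_mul, ← ofReal_sum,
    sum_sub_distrib, hshift, sum_const, card_univ, Fintype.card_fin, nsmul_eq_mul, mul_one]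
  push_cast
  ring

theorem not_realStable_cycle_of_sum_eq_zero {n : ℕ} [NeZero n] (a : Fin n → ℝ)
    (hsum : ∑ i, a i = 0) (hcycle : ∑ i, a i * a (i + 1) = n) :
    ¬ RealStable (∑ i : Fin n, (X i * X (i + 1) : MvPolynomial (Fin n) ℝ)) := fun h =>
  h (fun k => (a k : ℂ) + I) (fun _ => by simp)
    (by rw [aeval_cycle_ofReal_add_I, hsum, hcycle]; simp)

theorem Fin.sum_mul_add_one_eq_sum_range {R : Type*} [CommSemiring R] {n : ℕ} [NeZero n]
    (b : ℕ → R) (hb : b n = b 0) :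
    ∑ i : Fin n, b i * b ↑(i + 1) = ∑ k ∈ range n, b k * b (k + 1) := by
  rw [← Fin.sum_univ_eq_sum_range (fun k => b k * b (k + 1))]
  refine Finset.sum_congr rfl fun i _ => ?_
  by_cases h : (i : ℕ) + 1 < n
  · rw [Fin.val_add_one_of_lt' h]
  · have hi : (i : ℕ) + 1 = n := by omega
    have hwrap : ((i + 1 : Fin n) : ℕ) = 0 := by simp [Fin.val_add, hi]
    rw [hwrap, hi, hb]

theorem Finset.sum_range_of_eq_zero_of_le {M : Type*} [AddCommMonoid M] {f : ℕ → M} {N n : ℕ}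
    (hN : N ≤ n) (hf : ∀ k, N ≤ k → f k = 0) :
    ∑ k ∈ range n, f k = ∑ k ∈ range N, f k := by
  obtain ⟨m, rfl⟩ := Nat.exists_eq_add_of_le hN
  rw [sum_range_add, sum_eq_zero (s := range m) fun k _ => hf _ (by omega), add_zero]

def blockPattern (t : ℝ) : ℕ → ℝ
  | 1 | 2 => t
  | 4 | 5 => -t
  | _ => 0

theorem blockPattern_of_six_le (t : ℝ) {k : ℕ} (hk : 6 ≤ k) : blockPattern t k = 0 := by
  match k, hk with
  | k + 6, _ => rfl

theorem sum_range_blockPattern (t : ℝ) {n : ℕ} (hn : 6 ≤ n) :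
    ∑ k ∈ range n, blockPattern t k = 0 := by
  rw [sum_range_of_eq_zero_of_le hn fun k hk => blockPattern_of_six_le t hk]
  simp [sum_range_succ, blockPattern]

theorem sum_range_blockPattern_mul_succ (t : ℝ) {n : ℕ} (hn : 6 ≤ n) :
    ∑ k ∈ range n, blockPattern t k * blockPattern t (k + 1) = 2 * t ^ 2 := by
  rw [sum_range_of_eq_zero_of_le hn fun k hk => by rw [blockPattern_of_six_le t hk, zero_mul]]
  simp [sum_range_succ, blockPattern]
  ring

/-- For n ≥ 6 (written n = m + 6), the polynomial Q = Σ xᵢ x_{i+1}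
(indices cyclic mod n) is not real stable. -/
theorem stmt4 (m : ℕ) :
    ¬ RealStable (∑ i : Fin (m + 6), (X i * X (i + 1) : MvPolynomial (Fin (m + 6)) ℝ)) := by
  set t := √(((m + 6 : ℕ) : ℝ) / 2)
  have ht : 2 * t ^ 2 = (m + 6 : ℕ) := by
    rw [Real.sq_sqrt (by positivity)]
    ring
  refine not_realStable_cycle_of_sum_eq_zero (fun i => blockPattern t i) ?_ ?_
  · rw [Fin.sum_univ_eq_sum_range (blockPattern t), sum_range_blockPattern t (by omega)]
  · rw [Fin.sum_mul_add_one_eq_sum_range (blockPattern t) (blockPattern_of_six_le t (by omega)),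
      sum_range_blockPattern_mul_succ t (by omega), ht]
end

section
/- For every n ≥ 5, the vertex spanning polynomial of the n-cycle, P_{C_n}(x1,...,xn) = Σ_{i=1}^{n} Π_{j ≠ i, i+1} x_j (indices mod n), is not real stable. -/
/-!
If no coordinate of `z` vanishes, then `P(z) = (∏ⱼ zⱼ) · ∑ᵢ (zᵢ zᵢ₊₁)⁻¹`. The map `w ↦ (-w)⁻¹`
preserves the upper half-plane, so substituting `zᵢ = (-wᵢ)⁻¹` it suffices to find `w ∈ ℍⁿ` with
`∑ᵢ wᵢ wᵢ₊₁ = 0`. For `n = m + 5` take `w = (i, …, i, b, a, a, b)` with `m + 1` copies of `i`: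
the cyclic sum is `a² + 2ab + 2ib - m`, which vanishes for `a = (3t + i)/2`, `b = (-4t + i)/6`,
`t = √(4m + 3)`.
-/

open MvPolynomial Complex Finset

theorem aeval_sum_prod_compl_X {R K σ ι : Type*} [CommSemiring R] [Field K] [Algebra R K]
    [Fintype σ] [DecidableEq σ] (s : Finset ι) (t : ι → Finset σ) {z : σ → K}
    (hz : ∀ j, z j ≠ 0) :
    aeval z (∑ i ∈ s, ∏ j ∈ (t i)ᶜ, (X j : MvPolynomial σ R)) =
      (∏ j, z j) * ∑ i ∈ s, (∏ j ∈ t i, z j)⁻¹ := by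
  simp only [map_sum, map_prod, aeval_X, mul_sum]
  refine sum_congr rfl fun i _ => ?_
  rw [← prod_compl_mul_prod (t i), mul_inv_cancel_right₀ (prod_ne_zero_iff.mpr fun j _ => hz j)]

theorem Fin.sum_univ_mul_add_one_eq_sum_range {R : Type*} [CommSemiring R] (f : ℕ → R) (n : ℕ) :
    ∑ i : Fin (n + 1), f i * f ↑(i + 1) = ∑ k ∈ range n, f k * f (k + 1) + f n * f 0 := by
  rw [Fin.sum_univ_castSucc, Fin.last_add_one, ← Fin.sum_univ_eq_sum_range]
  congr 2
  ext i
  rw [Fin.val_add_one_of_lt (Fin.castSucc_lt_last i)]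
  rfl

noncomputable section

namespace CycleWitness

variable (m : ℕ)

def a : ℂ := ⟨3 * √(4 * m + 3) / 2, 1 / 2⟩

def b : ℂ := ⟨-(2 * √(4 * m + 3) / 3), 1 / 6⟩

theorem a_sq_add_two_mul_a_mul_b_add_two_mul_I_mul_b :
    a m ^ 2 + 2 * a m * b m + 2 * I * b m = m := by
  have hsqrt : ((√(4 * m + 3) : ℝ) : ℂ) ^ 2 = 4 * m + 3 := by
    rw [← ofReal_pow, Real.sq_sqrt (by positivity)]
    push_cast
    ring
  rw [a, b, mk_eq_add_mul_I, mk_eq_add_mul_I]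
  push_cast
  linear_combination (1 / 4 : ℂ) * hsqrt + (3 / 4 : ℂ) * I_sq

def w (k : ℕ) : ℂ := if k ≤ m then I else if k = m + 1 ∨ k = m + 4 then b m else a m

theorem im_w_pos (k : ℕ) : 0 < (w m k).im := by
  unfold w a b
  split_ifs <;> norm_num

theorem sum_w_mul_w_add_one : ∑ i : Fin (m + 5), w m i * w m ↑(i + 1) = 0 := by
  have hmid : ∀ k ∈ range m, w m k * w m (k + 1) = -1 := fun k hk => by
    have hk : k < m := mem_range.mp hk
    rw [w, w, if_pos hk.le, if_pos (Nat.succ_le_of_lt hk), I_mul_I]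
  have h0 : w m 0 = I := if_pos m.zero_le
  have hm : w m m = I := if_pos le_rfl
  have h1 : w m (m + 1) = b m := by simp [w]
  have h2 : w m (m + 2) = a m := by simp [w]
  have h3 : w m (m + 3) = a m := by simp [w]
  have h4 : w m (m + 4) = b m := by simp [w]
  rw [Fin.sum_univ_mul_add_one_eq_sum_range (w m) (m + 4)]
  simp only [sum_range_succ, sum_congr rfl hmid, add_assoc, Nat.reduceAdd, h0, hm, h1, h2, h3, h4,
    sum_const, card_range, nsmul_eq_mul]
  linear_combination a_sq_add_two_mul_a_mul_b_add_two_mul_I_mul_b m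

end CycleWitness

end

/-- For n ≥ 5 (written n = m + 5), the vertex spanning polynomial of the n-cycle,
`P = Σ_i Π_{j ∉ {i, i+1}} x_j` (indices mod n), is not real stable. -/
theorem stmt5 (m : ℕ) :
    ¬ RealStable (∑ i : Fin (m + 5), ∏ j ∈ ({i, i + 1}ᶜ : Finset (Fin (m + 5))),
        (X j : MvPolynomial (Fin (m + 5)) ℝ)) := by
  set w : Fin (m + 5) → ℂ := fun i => CycleWitness.w m i
  have hw : ∀ i, 0 < (w i).im := fun i => CycleWitness.im_w_pos m i
  set z : Fin (m + 5) → ℂ := fun i => (-w i)⁻¹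
  have hz : ∀ i, z i ≠ 0 := fun i => inv_ne_zero (neg_ne_zero.mpr (ne_of_apply_ne im (hw i).ne'))
  have hpair : ∀ i, (∏ j ∈ {i, i + 1}, z j)⁻¹ = w i * w (i + 1) := fun i => by
    rw [prod_pair (left_ne_add.mpr one_ne_zero)]
    simp only [z, mul_inv, inv_inv, neg_mul_neg]
  intro hstable
  apply hstable z fun i => UpperHalfPlane.im_inv_neg_coe_pos ⟨w i, hw i⟩
  rw [aeval_sum_prod_compl_X _ _ hz, sum_congr rfl fun i _ => hpair i,
    CycleWitness.sum_w_mul_w_add_one, mul_zero]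
end

section
/- Let G be a connected graph with a cut vertex v, let V1,...,Vk be the vertex sets of the connected components of G − v, and let G_i = G[V_i ∪ {v}]. Then P_G = x_v^{k−1} · Π_{i=1}^{k} P_{G_i} (where each P_{G_i} is in the variables corresponding to the vertices of G_i). -/
open MvPolynomial Finset

noncomputable def spanPoly (V : Type*) [Fintype V] (G : SimpleGraph V) :
    MvPolynomial V ℝ := by
  classical exact
    ∑ T ∈ Finset.univ.filter (fun T : SimpleGraph V => T ≤ G ∧ T.IsTree),
      ∏ v, (X v : MvPolynomial V ℝ) ^ (T.degree v - 1)

/-! A spanning tree `T` of `G` restricts to a spanning tree of every piece `G[Vᵢ ∪ {v}]`: a path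
between two vertices of a piece that leaves the piece would have to pass through `v` twice.
Conversely, spanning trees `Tᵢ` of the pieces glue at `v` to a spanning tree of `G`, and these two
operations are mutually inverse. A vertex `u ≠ v` has the same degree in `T` as in the tree of its
own piece, while `deg_T v = ∑ᵢ deg_{Tᵢ} v` with every `deg_{Tᵢ} v ≥ 1`, so that
`deg_T v - 1 = (k - 1) + ∑ᵢ (deg_{Tᵢ} v - 1)`: the monomial of `T` is `x_v ^ (k - 1)` times the
product of the monomials of the `Tᵢ`. -/

theorem Finset.sum_sub_one_of_pos {ι : Type*} {s : Finset ι} {f : ι → ℕ} (hf : ∀ i ∈ s, 0 < f i) :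
    ∑ i ∈ s, f i - 1 = (#s - 1) + ∑ i ∈ s, (f i - 1) := by
  have hcard : #s ≤ ∑ i ∈ s, f i := by
    simpa using card_nsmul_le_sum s f 1 hf
  rw [sum_tsub_distrib _ hf, sum_const, smul_eq_mul, mul_one]
  rcases s.eq_empty_or_nonempty with rfl | hs
  · simp
  · have := hs.card_pos
    omega

theorem MvPolynomial.rename_val_prod_X_pow {V R : Type*} [CommSemiring R] [Fintype V] (s : Set V)
    [Fintype s] [DecidablePred (· ∈ s)] (f : s → ℕ) :
    rename Subtype.val (∏ w : s, (X w : MvPolynomial s R) ^ f w)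
      = ∏ a, (X a : MvPolynomial V R) ^ (if ha : a ∈ s then f ⟨a, ha⟩ else 0) := by
  rw [← prod_subset (subset_univ s.toFinset) fun a _ ha => by rw [dif_neg (by simpa using ha),
    pow_zero], prod_subtype (F := ‹Fintype s›) s.toFinset fun _ => Set.mem_toFinset]
  simp

open Classical in
noncomputable def Set.retractTo {V : Type*} (s : Set V) (v : s) (a : V) : s :=
  if ha : a ∈ s then ⟨a, ha⟩ else v

theorem Set.retractTo_of_mem {V : Type*} {s : Set V} (v : s) {a : V} (ha : a ∈ s) :
    s.retractTo v a = ⟨a, ha⟩ := dif_pos ha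

namespace SimpleGraph

variable {V W : Type*}

theorem Reachable.map_of_eq_or_adj {G : SimpleGraph V} {H : SimpleGraph W} (f : V → W)
    (hf : ∀ {a b}, G.Adj a b → f a = f b ∨ H.Adj (f a) (f b)) {a b : V}
    (h : G.Reachable a b) : H.Reachable (f a) (f b) := by
  rw [reachable_iff_reflTransGen] at h ⊢
  refine Relation.ReflTransGen.lift' (p := H.Adj) f (fun c d hcd => ?_) _ _ h
  rcases hf hcd with e | e
  · rw [Function.onFun, e]
  · exact .single e

/-- The pieces `S i` play the role of the sets `Vᵢ ∪ {v}`. -/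
structure IsCutVertexDecomposition {ι : Type*} (G : SimpleGraph V) (v : V) (S : ι → Set V) :
    Prop where
  mem : ∀ i, v ∈ S i
  eq_of_mem_of_mem : ∀ {i j}, i ≠ j → ∀ {a}, a ∈ S i → a ∈ S j → a = v
  exists_mem : ∀ a, a ≠ v → ∃ i, a ∈ S i
  exists_mem_of_adj : ∀ {a b}, G.Adj a b → ∃ i, a ∈ S i ∧ b ∈ S i
  exists_ne : ∀ i, ∃ a ∈ S i, a ≠ v

def glue {ι : Type*} (S : ι → Set V) (p : ∀ i, SimpleGraph (S i)) : SimpleGraph V :=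
  ⨆ i, (p i).map (Function.Embedding.subtype _)

section glue

variable {ι : Type*} {S : ι → Set V} {p : ∀ i, SimpleGraph (S i)}

theorem glue_adj {a b : V} :
    (glue S p).Adj a b ↔ ∃ i, ∃ (ha : a ∈ S i) (hb : b ∈ S i), (p i).Adj ⟨a, ha⟩ ⟨b, hb⟩ := by
  simp only [glue, iSup_adj]
  rw [exists_congr fun i => map_adj _ _ _ _]
  constructor
  · rintro ⟨i, ⟨a, ha⟩, ⟨b, hb⟩, h, rfl, rfl⟩
    exact ⟨i, ha, hb, h⟩
  · rintro ⟨i, ha, hb, h⟩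
    exact ⟨i, _, _, h, rfl, rfl⟩

theorem glue_le {G : SimpleGraph V} (hp : ∀ i, p i ≤ G.induce (S i)) : glue S p ≤ G :=
  iSup_le fun i => (map_le_iff_le_comap _ _ _).2 (hp i)

end glue

namespace IsCutVertexDecomposition

variable {ι : Type*} {G : SimpleGraph V} {v : V} {S : ι → Set V}

theorem retractTo_of_ne (h : G.IsCutVertexDecomposition v S) {i j : ι} (hij : i ≠ j) {a : V}
    (ha : a ∈ S j) : (S i).retractTo ⟨v, h.mem i⟩ a = ⟨v, h.mem i⟩ := by
  by_cases hai : a ∈ S i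
  · rw [Set.retractTo_of_mem _ hai, Subtype.mk.injEq]
    exact h.eq_of_mem_of_mem hij hai ha
  · exact dif_neg hai

/-- The retraction collapses every edge of another piece to `v`. -/
theorem reachable_retractTo (h : G.IsCutVertexDecomposition v S) {H : SimpleGraph V}
    (hH : ∀ {a b}, H.Adj a b → ∃ j, a ∈ S j ∧ b ∈ S j) {i : ι} {K : SimpleGraph (S i)}
    (hK : ∀ {a b} (ha : a ∈ S i) (hb : b ∈ S i), H.Adj a b → K.Adj ⟨a, ha⟩ ⟨b, hb⟩)
    {a b : V} (hab : H.Reachable a b) :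
    K.Reachable ((S i).retractTo ⟨v, h.mem i⟩ a) ((S i).retractTo ⟨v, h.mem i⟩ b) := by
  refine hab.map_of_eq_or_adj _ fun {c d} hcd => ?_
  obtain ⟨j, hc, hd⟩ := hH hcd
  rcases eq_or_ne i j with rfl | hij
  · rw [Set.retractTo_of_mem _ hc, Set.retractTo_of_mem _ hd]
    exact .inr (hK hc hd hcd)
  · rw [h.retractTo_of_ne hij hc, h.retractTo_of_ne hij hd]
    exact .inl rfl

theorem induce_connected (h : G.IsCutVertexDecomposition v S) {T : SimpleGraph V} (hT : T ≤ G)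
    (hc : T.Connected) (i : ι) : (T.induce (S i)).Connected := by
  have : Nonempty (S i) := ⟨⟨v, h.mem i⟩⟩
  refine ⟨fun x y => ?_⟩
  simpa [Set.retractTo_of_mem] using h.reachable_retractTo (fun hab => h.exists_mem_of_adj (hT hab))
    (K := T.induce (S i)) (fun _ _ hab => hab) (hc.preconnected x y)

theorem isTree_induce (h : G.IsCutVertexDecomposition v S) {T : SimpleGraph V} (hT : T ≤ G)
    (ht : T.IsTree) (i : ι) : (T.induce (S i)).IsTree :=
  ⟨h.induce_connected hT ht.connected i, ht.isAcyclic.induce _⟩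

variable {p : ∀ i, SimpleGraph (S i)}

theorem glue_adj_iff_of_mem (h : G.IsCutVertexDecomposition v S) {i : ι} {a b : V}
    (ha : a ∈ S i) (hb : b ∈ S i) : (glue S p).Adj a b ↔ (p i).Adj ⟨a, ha⟩ ⟨b, hb⟩ := by
  refine ⟨fun hab => ?_, fun hab => glue_adj.2 ⟨i, ha, hb, hab⟩⟩
  obtain ⟨j, ha', hb', hab'⟩ := glue_adj.1 hab
  rcases eq_or_ne i j with rfl | hij
  · exact hab'
  · exact absurd ((h.eq_of_mem_of_mem hij ha ha').trans (h.eq_of_mem_of_mem hij hb hb').symm)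
      (glue_adj.2 ⟨j, ha', hb', hab'⟩).ne

theorem induce_glue (h : G.IsCutVertexDecomposition v S) (i : ι) :
    (glue S p).induce (S i) = p i := by
  ext ⟨a, ha⟩ ⟨b, hb⟩
  exact h.glue_adj_iff_of_mem ha hb

theorem glue_induce (h : G.IsCutVertexDecomposition v S) {T : SimpleGraph V} (hT : T ≤ G) :
    glue S (fun i => T.induce (S i)) = T := by
  ext a b
  refine ⟨fun hab => ?_, fun hab => ?_⟩
  · obtain ⟨i, _, _, hTab⟩ := glue_adj.1 hab
    exact hTab
  · obtain ⟨i, ha, hb⟩ := h.exists_mem_of_adj (hT hab)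
    exact glue_adj.2 ⟨i, ha, hb, hab⟩

theorem glue_connected (h : G.IsCutVertexDecomposition v S) (hp : ∀ i, (p i).Connected) :
    (glue S p).Connected := by
  have : Nonempty V := ⟨v⟩
  have hreach (a : V) : (glue S p).Reachable a v := by
    obtain rfl | hav := eq_or_ne a v
    · rfl
    obtain ⟨i, ha⟩ := h.exists_mem a hav
    let f : p i →g glue S p := ⟨Subtype.val, fun hxy => glue_adj.2 ⟨i, _, _, hxy⟩⟩
    exact ((hp i).preconnected ⟨a, ha⟩ ⟨v, h.mem i⟩).map f
  exact ⟨fun a b => (hreach a).trans (hreach b).symm⟩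

/-- Every edge of the glued graph is a bridge: retracting a detour onto the piece containing the
edge would give a detour in that piece. -/
theorem glue_isAcyclic (h : G.IsCutVertexDecomposition v S) (hp : ∀ i, (p i).IsAcyclic) :
    (glue S p).IsAcyclic := by
  refine isAcyclic_iff_forall_adj_isBridge.2 fun {a b} hab => isBridge_iff.2 fun hdetour => ?_
  obtain ⟨i, ha, hb, hab⟩ := glue_adj.1 hab
  refine isBridge_iff.1 (isAcyclic_iff_forall_adj_isBridge.1 (hp i) hab) ?_
  have hH {c d : V} (hcd : ((glue S p).deleteEdges {s(a, b)}).Adj c d) :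
      ∃ j, c ∈ S j ∧ d ∈ S j := by
    obtain ⟨j, hc, hd, -⟩ := glue_adj.1 hcd.1
    exact ⟨j, hc, hd⟩
  have hK {c d : V} (hc : c ∈ S i) (hd : d ∈ S i)
      (hcd : ((glue S p).deleteEdges {s(a, b)}).Adj c d) :
      ((p i).deleteEdges {s(⟨a, ha⟩, ⟨b, hb⟩)}).Adj ⟨c, hc⟩ ⟨d, hd⟩ := by
    rw [deleteEdges_adj] at hcd ⊢
    refine ⟨(h.glue_adj_iff_of_mem hc hd).1 hcd.1, fun he => hcd.2 ?_⟩
    simpa using congrArg (Sym2.map Subtype.val) (Set.mem_singleton_iff.1 he)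
  simpa [Set.retractTo_of_mem, ha, hb] using h.reachable_retractTo hH hK hdetour

theorem glue_isTree (h : G.IsCutVertexDecomposition v S) (hp : ∀ i, (p i).IsTree) :
    (glue S p).IsTree :=
  ⟨h.glue_connected fun i => (hp i).connected, h.glue_isAcyclic fun i => (hp i).isAcyclic⟩

theorem degree_pos (h : G.IsCutVertexDecomposition v S) {i : ι} (hp : (p i).Connected)
    [Fintype ((p i).neighborSet ⟨v, h.mem i⟩)] : 0 < (p i).degree ⟨v, h.mem i⟩ := by
  obtain ⟨b, hb, hbv⟩ := h.exists_ne i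
  have : Nontrivial (S i) := ⟨⟨⟨b, hb⟩, ⟨v, h.mem i⟩, fun e => hbv (congrArg Subtype.val e)⟩⟩
  exact hp.preconnected.degree_pos_of_nontrivial _

section degree

variable [Fintype V] [Fintype ι] [∀ i, Fintype (S i)]

open Classical in
theorem degree_glue (h : G.IsCutVertexDecomposition v S) (a : V) :
    (glue S p).degree a = ∑ i, if ha : a ∈ S i then (p i).degree ⟨a, ha⟩ else 0 := by
  have hN : (glue S p).neighborFinset a = univ.biUnion fun i =>
      if ha : a ∈ S i then ((p i).neighborFinset ⟨a, ha⟩).map (Function.Embedding.subtype _)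
      else ∅ := by
    ext b
    simp only [mem_neighborFinset, glue_adj, mem_biUnion, mem_univ, true_and]
    refine exists_congr fun i => ?_
    by_cases ha : a ∈ S i <;> simp [ha]
  rw [← card_neighborFinset_eq_degree, hN, card_biUnion]
  · refine sum_congr rfl fun i _ => ?_
    split_ifs <;> simp
  · intro i _ j _ hij
    rw [Function.onFun, Finset.disjoint_left]
    intro b hbi hbj
    have hai : a ∈ S i := by by_contra hai; simp [hai] at hbi
    have haj : a ∈ S j := by by_contra haj; simp [haj] at hbj
    simp only [hai, haj, dite_true, mem_map, mem_neighborFinset,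
      Function.Embedding.coe_subtype] at hbi hbj
    obtain ⟨⟨b, hbi⟩, hab, rfl⟩ := hbi
    obtain ⟨⟨_, hbj⟩, -, rfl⟩ := hbj
    exact hab.ne (Subtype.ext ((h.eq_of_mem_of_mem hij hai haj).trans
      (h.eq_of_mem_of_mem hij hbi hbj).symm))

open Classical in
theorem degree_glue_sub_one (h : G.IsCutVertexDecomposition v S) (hp : ∀ i, (p i).Connected)
    (a : V) : (glue S p).degree a - 1 = (if a = v then Fintype.card ι - 1 else 0)
      + ∑ i, (if ha : a ∈ S i then (p i).degree ⟨a, ha⟩ - 1 else 0) := by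
  rw [h.degree_glue]
  split_ifs with hav
  · subst hav
    simp only [dif_pos (h.mem _)]
    exact sum_sub_one_of_pos fun i _ => h.degree_pos (hp i)
  · obtain ⟨j, hj⟩ := h.exists_mem a hav
    have hi (i : ι) (hij : i ≠ j) : a ∉ S i := fun hi => hav (h.eq_of_mem_of_mem hij hi hj)
    rw [sum_eq_single j, sum_eq_single j, zero_add]
    all_goals simp_all

open Classical in
theorem prod_X_pow_degree_glue {R : Type*} [CommSemiring R] (h : G.IsCutVertexDecomposition v S)
    (hp : ∀ i, (p i).Connected) :
    ∏ a, (X a : MvPolynomial V R) ^ ((glue S p).degree a - 1)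
      = X v ^ (Fintype.card ι - 1)
        * ∏ i, rename Subtype.val
            (∏ w : S i, (X w : MvPolynomial (S i) R) ^ ((p i).degree w - 1)) := by
  simp_rw [rename_val_prod_X_pow, h.degree_glue_sub_one hp, pow_add, prod_mul_distrib]
  rw [prod_comm (s := univ (α := ι))]
  simp only [prod_pow_eq_pow_sum, pow_ite, pow_zero, prod_ite_eq', mem_univ, if_true]

end degree

theorem spanPoly_eq [Fintype V] [Fintype ι] [∀ i, Fintype (S i)]
    (h : G.IsCutVertexDecomposition v S) :
    spanPoly V G = X v ^ (Fintype.card ι - 1)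
      * ∏ i, rename Subtype.val (spanPoly (S i) (G.induce (S i))) := by
  classical
  simp only [spanPoly, map_sum]
  rw [prod_univ_sum, mul_sum]
  refine sum_nbij' (fun T i => T.induce (S i)) (glue S) ?_ ?_ ?_ ?_ ?_
  · intro T hT
    simp only [mem_filter, mem_univ, true_and, Fintype.mem_piFinset] at hT ⊢
    exact fun i => ⟨fun _ _ hab => hT.1 hab, h.isTree_induce hT.1 hT.2 i⟩
  · intro p hp
    simp only [mem_filter, mem_univ, true_and, Fintype.mem_piFinset] at hp ⊢
    exact ⟨glue_le fun i => (hp i).1, h.glue_isTree fun i => (hp i).2⟩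
  · intro T hT
    exact h.glue_induce (mem_filter.1 hT).2.1
  · intro p _
    funext i
    exact h.induce_glue i
  · intro T hT
    obtain ⟨hTG, hT⟩ := (mem_filter.1 hT).2
    conv_lhs => rw [← h.glue_induce hTG]
    exact h.prod_X_pow_degree_glue fun i => (h.isTree_induce hTG hT i).connected

end IsCutVertexDecomposition

theorem isCutVertexDecomposition_insert [DecidableEq V] {ι : Type*} {G : SimpleGraph V} {v : V}
    {A : ι → Finset V} (hne : ∀ i, (A i).Nonempty) (hv : ∀ i, v ∉ A i)
    (hdisj : ∀ i j, i ≠ j → Disjoint (A i) (A j)) (hcover : ∀ u : V, u ≠ v → ∃ i, u ∈ A i)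
    (hnoedge : ∀ i j, i ≠ j → ∀ a ∈ A i, ∀ b ∈ A j, ¬ G.Adj a b) :
    G.IsCutVertexDecomposition v fun i => ((insert v (A i) : Finset V) : Set V) where
  mem i := by simp
  eq_of_mem_of_mem {i j} hij a ha hb := by
    simp only [coe_insert, Set.mem_insert_iff, mem_coe] at ha hb
    rcases ha with rfl | ha
    · rfl
    rcases hb with rfl | hb
    · rfl
    exact absurd hb (Finset.disjoint_left.1 (hdisj i j hij) ha)
  exists_mem a hav := by
    obtain ⟨i, ha⟩ := hcover a hav
    exact ⟨i, by simp [ha]⟩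
  exists_mem_of_adj {a b} hab := by
    simp only [coe_insert, Set.mem_insert_iff, mem_coe]
    obtain rfl | hav := eq_or_ne a v
    · obtain ⟨i, hb⟩ := hcover b hab.ne'
      exact ⟨i, .inl rfl, .inr hb⟩
    obtain rfl | hbv := eq_or_ne b v
    · obtain ⟨i, ha⟩ := hcover a hab.ne
      exact ⟨i, .inr ha, .inl rfl⟩
    obtain ⟨i, ha⟩ := hcover a hav
    obtain ⟨j, hb⟩ := hcover b hbv
    obtain rfl | hij := eq_or_ne i j
    · exact ⟨i, .inr ha, .inr hb⟩
    · exact absurd hab (hnoedge i j hij a ha b hb)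
  exists_ne i := by
    obtain ⟨a, ha⟩ := hne i
    exact ⟨a, by simp [ha], fun hav => hv i (hav ▸ ha)⟩

end SimpleGraph

theorem stmt12_general {V : Type*} [Fintype V] [DecidableEq V] (G : SimpleGraph V)
    (v : V) (k : ℕ) (A : Fin k → Finset V)
    (hne : ∀ i, (A i).Nonempty)
    (hv : ∀ i, v ∉ A i)
    (hdisj : ∀ i j, i ≠ j → Disjoint (A i) (A j))
    (hcover : ∀ u : V, u ≠ v → ∃ i, u ∈ A i)
    (hnoedge : ∀ i j, i ≠ j → ∀ a ∈ A i, ∀ b ∈ A j, ¬ G.Adj a b) :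
    spanPoly V G
      = (X v : MvPolynomial V ℝ) ^ (k - 1)
        * ∏ i : Fin k,
            MvPolynomial.rename (Subtype.val)
              (spanPoly _ (G.induce ((insert v (A i) : Finset V) : Set V))) := by
  rw [(SimpleGraph.isCutVertexDecomposition_insert hne hv hdisj hcover hnoedge).spanPoly_eq,
    Fintype.card_fin]

/-- Gluing lemma: if `v` is a cut vertex of the connected graph `G`, and
`A 1, …, A k` are the vertex sets of the connected components of `G - v`, then
`P_G = x_v^(k-1) · Π_i P_{G[A i ∪ {v}]}`. -/
theorem stmt12 {V : Type*} [Fintype V] [DecidableEq V] (G : SimpleGraph V)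
    (hG : G.Connected) (v : V) (k : ℕ) (hk : 2 ≤ k) (A : Fin k → Finset V)
    (hne : ∀ i, (A i).Nonempty)
    (hv : ∀ i, v ∉ A i)
    (hdisj : ∀ i j, i ≠ j → Disjoint (A i) (A j))
    (hcover : ∀ u : V, u ≠ v → ∃ i, u ∈ A i)
    (hconn : ∀ i, (G.induce ((A i : Finset V) : Set V)).Connected)
    (hnoedge : ∀ i j, i ≠ j → ∀ a ∈ A i, ∀ b ∈ A j, ¬ G.Adj a b) :
    spanPoly V G
      = (X v : MvPolynomial V ℝ) ^ (k - 1)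
        * ∏ i : Fin k,
            MvPolynomial.rename (Subtype.val)
              (spanPoly _ (G.induce ((insert v (A i) : Finset V) : Set V))) :=
  stmt12_general G v k A hne hv hdisj hcover hnoedge
end

section
/- The vertex spanning polynomial of the complete graph K_n equals (x1 + x2 + ... + x_n)^{n−2} (Cayley's formula). -/
/-!
For `c : V → ℕ` with `∑ c = |V| - 2`, the number of trees on `V` in which every vertex `v` has
degree `c v + 1` is the multinomial coefficient `(|V| - 2)! / ∏ (c v)!`; by the multinomial
theorem this is exactly the coefficient of `∏ x_v ^ c v` in `(∑ x_v) ^ (|V| - 2)`.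

The count goes by induction on `∑ c`. Some vertex `v` has `c v = 0`, i.e. it is a leaf of every
tree counted. Deleting it is a bijection from the trees in which `v` hangs at `j` onto the trees on
`V \ {v}` whose degrees are those of `c + 1` lowered by one at `j`, so the counts obey the same
recursion `multinomial c = ∑_{c j ≠ 0} multinomial (c - e_j)` as the multinomial coefficients.
A graph on `V` with degree sum `2 |V| - 2` is a tree as soon as it is connected, so along the
induction only connectivity has to be tracked.
-/

open MvPolynomial Finset

@[to_additive]
theorem Fintype.prod_subtype_of_eq_one {α M : Type*} [Fintype α] [CommMonoid M] {p : α → Prop}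
    [DecidablePred p] [Fintype (Subtype p)] {f : α → M} (hf : ∀ a, ¬ p a → f a = 1) :
    ∏ a : Subtype p, f a = ∏ a, f a := by
  rw [← prod_subtype {a | p a} (by simp), prod_filter_of_ne fun a _ ha ↦ by_contra (ha <| hf a ·)]

namespace Nat

theorem multinomial_eq_sum_multinomial_update {α : Type*} [DecidableEq α] {s : Finset α}
    {f : α → ℕ} (hf : ∑ i ∈ s, f i ≠ 0) :
    multinomial s f = ∑ i ∈ s with f i ≠ 0, multinomial s (Function.update f i (f i - 1)) := by
  refine Nat.eq_of_mul_eq_mul_left (prod_pos fun i (_ : i ∈ s) ↦ (f i).factorial_pos) ?_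
  rw [multinomial_spec, mul_sum]
  have key : ∀ i ∈ {i ∈ s | f i ≠ 0}, (∏ k ∈ s, (f k)!) *
      multinomial s (Function.update f i (f i - 1)) = f i * (∑ k ∈ s, f k - 1)! := by
    intro i hi
    obtain ⟨hi, hfi⟩ := mem_filter.mp hi
    have hprod : ∏ k ∈ s, (f k)! = f i * ∏ k ∈ s, (Function.update f i (f i - 1) k)! := by
      rw [← mul_prod_erase s _ hi, ← mul_prod_erase s _ hi, Function.update_self, ← mul_assoc,
        mul_factorial_pred hfi]
      congr 1
      exact prod_congr rfl fun k hk ↦ by rw [Function.update_of_ne (ne_of_mem_erase hk)]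
    have hsum : ∑ k ∈ s, Function.update f i (f i - 1) k = ∑ k ∈ s, f k - 1 := by
      rw [sum_update_of_mem hi, sdiff_singleton_eq_erase, ← add_sum_erase s f hi]
      omega
    rw [hprod, mul_assoc, multinomial_spec, hsum]
  rw [sum_congr rfl key, ← sum_mul, sum_filter_ne_zero, mul_factorial_pred hf]

theorem multinomial_subtype_of_eq_zero {α : Type*} [Fintype α] {p : α → Prop}
    [DecidablePred p] [Fintype (Subtype p)] {f : α → ℕ} (hf : ∀ a, ¬ p a → f a = 0) :
    multinomial univ (fun a : Subtype p ↦ f a) = multinomial univ f := by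
  rw [multinomial, multinomial, Fintype.sum_subtype_of_eq_zero hf,
    Fintype.prod_subtype_of_eq_one (f := fun a ↦ (f a)!)
      fun a ha ↦ by rw [hf a ha, factorial_zero]]

end Nat

namespace SimpleGraph

variable {V : Type*}

lemma adj_iff_eq_of_degree_eq_one {G : SimpleGraph V} {v : V} [Fintype (G.neighborSet v)]
    (hv : G.degree v = 1) {w : V} (hw : G.Adj v w) (x : V) : G.Adj v x ↔ x = w := by
  obtain ⟨y, -, hy⟩ := degree_eq_one_iff_existsUnique_adj.mp hv
  exact ⟨fun hx ↦ (hy x hx).trans (hy w hw).symm, fun hx ↦ hx ▸ hw⟩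

lemma isTree_iff_connected_and_sum_degrees [Fintype V] {G : SimpleGraph V} [DecidableRel G.Adj] :
    G.IsTree ↔ G.Connected ∧ ∑ v, G.degree v + 2 = 2 * Fintype.card V := by
  simp only [isTree_iff_connected_and_card, sum_degrees_eq_twice_card_edges,
    Nat.card_eq_fintype_card, edgeFinset_card]
  exact and_congr_right fun _ ↦ by omega

lemma degree_eq_degree_induce_compl_singleton_add [Fintype V] [DecidableEq V] {v : V}
    (T : SimpleGraph V) [DecidableRel T.Adj] (u : ({v}ᶜ : Set V)) :
    T.degree u = (T.induce {v}ᶜ).degree u + if T.Adj u v then 1 else 0 := by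
  rw [← card_neighborFinset_eq_degree, ← card_neighborFinset_eq_degree, ← card_map (.subtype _),
    map_neighborFinset_induce, Set.toFinset_compl, Set.toFinset_singleton,
    ← sdiff_eq_inter_compl, sdiff_singleton_eq_erase]
  split_ifs with h
  · exact (card_erase_add_one (by simpa using h)).symm
  · rw [erase_eq_of_notMem (by simpa using h), add_zero]

section AttachLeaf

def attachLeaf (v : V) (S : SimpleGraph ({v}ᶜ : Set V)) (j : ({v}ᶜ : Set V)) : SimpleGraph V :=
  S.map (Function.Embedding.subtype _) ⊔ edge v j

variable {v : V} {S : SimpleGraph ({v}ᶜ : Set V)} {j : ({v}ᶜ : Set V)}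

lemma attachLeaf_adj_left {x : V} : (attachLeaf v S j).Adj v x ↔ x = j := by
  have := j.2
  simp only [attachLeaf, sup_adj, map_adj, edge_adj]
  aesop

lemma attachLeaf_adj_coe {a b : ({v}ᶜ : Set V)} : (attachLeaf v S j).Adj a b ↔ S.Adj a b := by
  have ha : (a : V) ≠ v := a.2
  have hb : (b : V) ≠ v := b.2
  simp only [attachLeaf, sup_adj, edge_adj, ha, hb, false_and, and_false, or_self, or_false]
  rw [← Function.Embedding.coe_subtype, map_adj_apply]

lemma induce_attachLeaf : (attachLeaf v S j).induce {v}ᶜ = S := by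
  ext a b
  exact attachLeaf_adj_coe

lemma attachLeaf_induce {T : SimpleGraph V} (h : ∀ x, T.Adj v x ↔ x = j) :
    attachLeaf v (T.induce {v}ᶜ) j = T := by
  ext a b
  by_cases ha : a = v
  · subst ha
    rw [attachLeaf_adj_left, h]
  by_cases hb : b = v
  · subst hb
    rw [adj_comm, attachLeaf_adj_left, adj_comm, h]
  exact attachLeaf_adj_coe (a := ⟨a, ha⟩) (b := ⟨b, hb⟩)

lemma Connected.attachLeaf (hS : S.Connected) : (SimpleGraph.attachLeaf v S j).Connected := by
  let incl : S →g SimpleGraph.attachLeaf v S j := ⟨Subtype.val, attachLeaf_adj_coe.mpr⟩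
  refine connected_iff_exists_forall_reachable _ |>.mpr ⟨j, fun x ↦ ?_⟩
  by_cases hx : x = v
  · subst hx
    exact (attachLeaf_adj_left.mpr rfl).reachable.symm
  · exact (hS.preconnected j ⟨x, hx⟩).map incl

end AttachLeaf

section Count

open scoped Classical

variable [Fintype V]

lemma card_eq_sum_card_adj_of_degree_eq_one {A : Finset (SimpleGraph V)} {v : V}
    (hA : ∀ T ∈ A, T.degree v = 1) : #A = ∑ w, #{T ∈ A | T.Adj v w} := by
  rw [card_eq_sum_ones, sum_congr rfl fun T hT ↦ (hA T hT).symm]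
  simp_rw [← card_neighborFinset_eq_degree, neighborFinset_eq_filter]
  exact sum_card_bipartiteAbove_eq_sum_card_bipartiteBelow fun (T : SimpleGraph V) w ↦ T.Adj v w

lemma IsTree.sum_degree_sub_one [Nontrivial V] {T : SimpleGraph V} (hT : T.IsTree) :
    ∑ v, (T.degree v - 1) = Fintype.card V - 2 := by
  have hpos (v : V) : 1 ≤ T.degree v := hT.connected.preconnected.degree_pos_of_nontrivial v
  have hsum := (isTree_iff_connected_and_sum_degrees.mp hT).2
  have : ∑ v, (T.degree v - 1) + Fintype.card V = ∑ v, T.degree v := by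
    rw [← card_univ, card_eq_sum_ones, ← sum_add_distrib]
    exact sum_congr rfl fun v _ ↦ Nat.sub_add_cancel (hpos v)
  omega

lemma isTree_and_degree_sub_one_iff [Nontrivial V] {T : SimpleGraph V} {k : V → ℕ}
    (hk : ∑ v, k v = Fintype.card V - 2) :
    (T.IsTree ∧ ∀ v, T.degree v - 1 = k v) ↔ (T.Connected ∧ ∀ v, T.degree v = k v + 1) := by
  have h2 : 2 ≤ Fintype.card V := Fintype.one_lt_card
  rw [isTree_iff_connected_and_sum_degrees]
  refine ⟨fun ⟨⟨hconn, _⟩, hk⟩ ↦ ⟨hconn, fun v ↦ ?_⟩,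
    fun ⟨hconn, hk⟩ ↦ ⟨⟨hconn, ?_⟩, fun v ↦ ?_⟩⟩
  · have := hconn.preconnected.degree_pos_of_nontrivial v
    have := hk v
    omega
  · simp_rw [hk, sum_add_distrib, sum_const, card_univ, smul_eq_mul]
    omega
  · rw [hk v, Nat.add_sub_cancel]

-- A genuine instance rather than the classical one, so that the induction hypothesis at the
-- subtype `{v}ᶜ` uses the same `Fintype (SimpleGraph _)` instance as the leaf bijection.
variable [DecidableEq V]

lemma card_connected_degree_eq_one_of_card_eq_two (h : Fintype.card V = 2) :
    #{T : SimpleGraph V | T.Connected ∧ ∀ v, T.degree v = 1} = 1 := by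
  have : Nonempty V := Fintype.card_pos_iff.mp (by omega)
  rw [card_eq_one]
  refine ⟨⊤, eq_singleton_iff_unique_mem.mpr ⟨?_, fun T hT ↦ ?_⟩⟩
  · simp only [mem_filter, mem_univ, true_and]
    refine ⟨connected_top, fun v ↦ ?_⟩
    convert (degree_eq_card_sub_one _ v).mpr (IsUniversal.top (V := V))
    omega
  · simp only [mem_filter, mem_univ, true_and] at hT
    refine eq_top_iff_forall_isUniversal.mpr fun v ↦ ?_
    rw [← degree_eq_card_sub_one, hT.2, h]

lemma card_connected_degree_adj_eq_card_compl {v : V} (d : V → ℕ) (hd : d v = 1)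
    (j : ({v}ᶜ : Set V)) :
    #{T : SimpleGraph V | (T.Connected ∧ ∀ x, T.degree x = d x) ∧ T.Adj v j} =
      #{S : SimpleGraph ({v}ᶜ : Set V) | S.Connected ∧
        ∀ u, S.degree u + (if u = j then 1 else 0) = d u} := by
  have degree_coe {T : SimpleGraph V} (hT : ∀ x, T.Adj v x ↔ x = j) (u : ({v}ᶜ : Set V)) :
      T.degree u = (T.induce {v}ᶜ).degree u + if u = j then 1 else 0 := by
    simp_rw [degree_eq_degree_induce_compl_singleton_add T u, adj_comm _ _ v, hT, Subtype.ext_iff]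
  refine card_nbij' (·.induce {v}ᶜ) (attachLeaf v · j) ?_ ?_ ?_ fun S _ ↦ induce_attachLeaf
  · simp only [coe_filter, mem_univ, true_and]
    rintro T ⟨⟨hconn, hdeg⟩, hadj⟩
    have hT := adj_iff_eq_of_degree_eq_one ((hdeg v).trans hd) hadj
    refine ⟨hconn.induce_compl_singleton_of_degree_eq_one ((hdeg v).trans hd), fun u ↦ ?_⟩
    rw [← hdeg]
    convert (degree_coe hT u).symm
  · simp only [coe_filter, mem_univ, true_and]
    rintro S ⟨hconn, hdeg⟩
    refine ⟨⟨hconn.attachLeaf, fun x ↦ ?_⟩, attachLeaf_adj_left.mpr rfl⟩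
    by_cases hx : x = v
    · subst hx
      rw [hd, degree_eq_one_iff_existsUnique_adj]
      exact ⟨j, attachLeaf_adj_left.mpr rfl, fun y ↦ attachLeaf_adj_left.mp⟩
    · rw [← hdeg ⟨x, hx⟩]
      convert degree_coe (fun _ ↦ attachLeaf_adj_left) ⟨x, hx⟩ using 3
      exact induce_attachLeaf.symm
  · simp only [coe_filter, mem_univ, true_and]
    rintro T ⟨⟨-, hdeg⟩, hadj⟩
    exact attachLeaf_induce (adj_iff_eq_of_degree_eq_one ((hdeg v).trans hd) hadj)

lemma card_connected_degree_adj_leaf {v : V} (c : V → ℕ) (hv : c v = 0) (j : ({v}ᶜ : Set V))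
    (hV : 3 ≤ Fintype.card V) :
    #{T : SimpleGraph V | (T.Connected ∧ ∀ x, T.degree x = c x + 1) ∧ T.Adj v j} =
      if c j ≠ 0 then
        #{S : SimpleGraph ({v}ᶜ : Set V) | S.Connected ∧
          ∀ u, S.degree u = Function.update c j (c j - 1) u + 1}
      else 0 := by
  rw [card_connected_degree_adj_eq_card_compl (c · + 1) (by simp [hv]) j]
  split_ifs with hcj
  · congr 2
    ext S
    refine and_congr_right fun _ ↦ forall_congr' fun u ↦ ?_
    by_cases hu : u = j
    · subst hu
      simp only [if_pos, Function.update_self]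
      omega
    · rw [if_neg hu, Function.update_of_ne (fun h ↦ hu (Subtype.ext h))]
      rfl
  · rw [card_eq_zero, filter_eq_empty_iff]
    rintro S - ⟨hconn, hdeg⟩
    have : Nontrivial ({v}ᶜ : Set V) := Fintype.one_lt_card_iff_nontrivial.mp <| by
      rw [Fintype.card_compl_set, Fintype.card_unique (α := ({v} : Set V))]
      omega
    have := hconn.preconnected.degree_pos_of_nontrivial j
    have := hdeg j
    simp_all

theorem card_connected_degree_eq_add_one (c : V → ℕ) (hc : ∑ v, c v + 2 = Fintype.card V) :
    #{T : SimpleGraph V | T.Connected ∧ ∀ v, T.degree v = c v + 1} = Nat.multinomial univ c := by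
  induction hn : ∑ v, c v generalizing V with
  | zero =>
    obtain rfl : c = 0 := funext fun v ↦ sum_eq_zero_iff.mp hn v (mem_univ v)
    simpa [Nat.multinomial] using card_connected_degree_eq_one_of_card_eq_two (V := V) (by omega)
  | succ n ih =>
    obtain ⟨v, -, hv⟩ : ∃ v ∈ univ, c v < 1 :=
      exists_lt_of_sum_lt (by simp only [sum_const, card_univ, smul_eq_mul]; omega)
    replace hv : c v = 0 := by omega
    have hfiber (j : V) :
        #{T : SimpleGraph V | (T.Connected ∧ ∀ v, T.degree v = c v + 1) ∧ T.Adj v j} =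
          if c j ≠ 0 then Nat.multinomial univ (Function.update c j (c j - 1)) else 0 := by
      by_cases hjv : j = v
      · subst hjv
        simp [hv]
      rw [card_connected_degree_adj_leaf c hv ⟨j, hjv⟩ (by omega)]
      refine if_ctx_congr Iff.rfl (fun hcj ↦ ?_) fun _ ↦ rfl
      obtain ⟨c', hc'⟩ : ∃ c', c' = Function.update c j (c j - 1) := ⟨_, rfl⟩
      rw [← hc']
      have hc'v (a : V) (ha : a ∉ ({v}ᶜ : Set V)) : c' a = 0 := by
        rw [Set.notMem_compl_iff, Set.mem_singleton_iff] at ha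
        rw [ha, hc', Function.update_of_ne (Ne.symm hjv), hv]
      have hsum : ∑ u : ({v}ᶜ : Set V), c' u = n := by
        rw [Fintype.sum_subtype_of_eq_zero hc'v, hc', sum_update_of_mem (mem_univ j),
          sdiff_singleton_eq_erase]
        rw [← add_sum_erase _ _ (mem_univ j)] at hn
        omega
      have hcard : Fintype.card ({v}ᶜ : Set V) = n + 2 := by
        rw [Fintype.card_compl_set, Fintype.card_unique (α := ({v} : Set V))]
        omega
      rw [← Nat.multinomial_subtype_of_eq_zero hc'v,
        ← ih (fun u : ({v}ᶜ : Set V) ↦ c' u) (by omega) hsum]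
    rw [card_eq_sum_card_adj_of_degree_eq_one (v := v) fun T hT ↦ by
      rw [(mem_filter.mp hT).2.2 v, hv]]
    simp_rw [filter_filter]
    rw [sum_congr rfl fun j _ ↦ hfiber j, ← sum_filter,
      Nat.multinomial_eq_sum_multinomial_update (by omega)]

end Count

end SimpleGraph

open SimpleGraph

theorem spanPoly_top_of_card_le_one (V : Type*) [Fintype V] [Nonempty V]
    (h : Fintype.card V ≤ 1) : spanPoly V ⊤ = 1 := by
  classical
  have hsub := Fintype.card_le_one_iff_subsingleton.mp h
  have hT : (⊤ : SimpleGraph V).IsTree := .of_subsingleton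
  have huniq (T : SimpleGraph V) : T = ⊤ := Subsingleton.elim _ _
  -- otherwise `Unique (SimpleGraph V)` supplies a second `Fintype (SimpleGraph V)` instance
  clear hsub
  rw [spanPoly]
  refine (sum_eq_single_of_mem ⊤ ?_ fun T _ hT ↦ (hT (huniq T)).elim).trans ?_
  · rw [mem_filter]
    exact ⟨mem_univ _, le_rfl, hT⟩
  · refine prod_eq_one fun v _ ↦ ?_
    have := (⊤ : SimpleGraph V).degree_lt_card_verts v
    convert pow_zero (X v : MvPolynomial V ℝ) using 2
    convert (show (⊤ : SimpleGraph V).degree v - 1 = 0 by omega)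

theorem spanPoly_top_of_nontrivial (V : Type*) [Fintype V] [Nontrivial V] :
    spanPoly V ⊤ = (∑ v, X v) ^ (Fintype.card V - 2) := by
  classical
  have h2 : 2 ≤ Fintype.card V := Fintype.one_lt_card
  unfold spanPoly
  simp only [le_top, true_and]
  rw [sum_pow_eq_sum_piAntidiag, ← sum_fiberwise_of_maps_to (g := fun T v ↦ T.degree v - 1)
    (t := piAntidiag univ (Fintype.card V - 2)) fun T hT ↦ ?_]
  · refine sum_congr rfl fun k hk ↦ ?_
    have hk : ∑ v, k v = Fintype.card V - 2 := (mem_piAntidiag.mp hk).1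
    refine (sum_congr rfl fun T hT ↦ (?_ : _ = ∏ v, X v ^ k v)).trans ?_
    · obtain rfl := (mem_filter.mp hT).2
      rfl
    rw [sum_const, filter_filter, nsmul_eq_mul]
    simp_rw [_root_.funext_iff, isTree_and_degree_sub_one_iff hk]
    rw [card_connected_degree_eq_add_one k (by omega)]
  · rw [mem_piAntidiag]
    exact ⟨(mem_filter.mp hT).2.sum_degree_sub_one, by simp⟩

/-- Cayley's formula: the vertex spanning polynomial of the complete graph Kₙ equals
`(x₁ + ⋯ + xₙ)^(n-2)`. -/
theorem stmt15 (n : ℕ) (hn : 1 ≤ n) :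
    spanPoly (Fin n) ⊤ = (∑ i : Fin n, (X i : MvPolynomial (Fin n) ℝ)) ^ (n - 2) := by
  obtain rfl | hn2 : n = 1 ∨ 2 ≤ n := by omega
  · simpa using spanPoly_top_of_card_le_one (Fin 1) le_rfl
  · have : Nontrivial (Fin n) := Fin.nontrivial_iff_two_le.mpr hn2
    simpa using spanPoly_top_of_nontrivial (Fin n)
end

section
/- Let n ≥ 6 and specialize the Laurent-free form of P_{C_n} by the coloring f(1)=f(2)=1, f(4)=f(5)=2, f(k)=3 otherwise. The resulting polynomial Q(y1,y2,y3) contains the monomials y1²·y3^{n−4} and y2²·y3^{n−4} with nonzero coefficients, but the coefficient of y1·y2·y3^{n−4} is zero; hence the Newton polytope of Q is not saturated. -/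
/-!
Colour the vertices of the cycle by `g`. The term of `P_{C_n}` attached to the edge `{i, i+1}`
specializes to the monomial `y^(T - e_{g i} - e_{g (i+1)})`, where `T` counts the vertices of
each colour, so the coefficient of `y^d` in `Q` is the number of edges whose two end colours make
up `T - d`. Here `T = y₁² y₂² y₃^(n-4)`: the edges `{4, 5}` and `{1, 2}` produce `y₁² y₃^(n-4)` and
`y₂² y₃^(n-4)`, while no edge joins colour 1 to colour 2, so `y₁ y₂ y₃^(n-4)` does not occur.
-/

open MvPolynomial Finset

section CyclePolynomial

variable (R : Type*) [CommSemiring R] {σ τ : Type*}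

noncomputable def cyclePolynomial (n : ℕ) [NeZero n] : MvPolynomial (Fin n) R :=
  ∑ i, ∏ j ∈ ({i, i + 1}ᶜ : Finset (Fin n)), X j

noncomputable def colourCount (g : σ → τ) (s : Finset σ) : τ →₀ ℕ :=
  ∑ j ∈ s, Finsupp.single (g j) 1

variable {R}

theorem Fin.ne_add_one {n : ℕ} (i : Fin (n + 2)) : i ≠ i + 1 := by
  intro h
  have h' := congrArg Fin.val h
  rw [Fin.val_add_one] at h'
  split_ifs at h' with hi
  · simp [hi] at h'
  · omega

theorem colourCount_pair {n : ℕ} (g : Fin (n + 2) → τ) (i : Fin (n + 2)) :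
    colourCount g {i, i + 1} = Finsupp.single (g i) 1 + Finsupp.single (g (i + 1)) 1 :=
  sum_pair i.ne_add_one

theorem rename_prod_X (g : σ → τ) (s : Finset σ) :
    rename (R := R) g (∏ j ∈ s, X j) = monomial (colourCount g s) 1 := by
  simp only [map_prod, rename_X, colourCount, monomial_sum_one]
  rfl

theorem coeff_rename_cyclePolynomial [DecidableEq τ] {n : ℕ} (g : Fin (n + 2) → τ) (d : τ →₀ ℕ) :
    coeff d (rename g (cyclePolynomial R (n + 2)))
      = #{i | d + colourCount g {i, i + 1} = colourCount g univ} := by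
  have hsplit (i : Fin (n + 2)) :
      colourCount g {i, i + 1}ᶜ + colourCount g {i, i + 1} = colourCount g univ :=
    sum_compl_add_sum _ _
  simp only [cyclePolynomial, map_sum, rename_prod_X, coeff_sum, coeff_monomial]
  rw [← sum_boole]
  refine sum_congr rfl fun i _ => if_congr ⟨fun h => ?_, fun h => ?_⟩ rfl rfl
  · rw [← hsplit i, h]
  · exact add_right_cancel ((hsplit i).trans h.symm)

end CyclePolynomial

section Colouring

/-- Vertices and colours are numbered from `0`: vertex `k` and colour `c` here are the paper's
vertex `k + 1` and colour `c + 1`. -/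
def colour (k : ℕ) : Fin 3 :=
  if k = 0 ∨ k = 1 then 0 else if k = 3 ∨ k = 4 then 1 else 2

theorem colourCount_colour_univ (m : ℕ) :
    colourCount (fun j : Fin (m + 6) => colour j) univ
      = Finsupp.single 0 2 + Finsupp.single 1 2 + Finsupp.single 2 (m + 2) := by
  have htail (k : ℕ) : colour (6 + k) = 2 := by
    simp only [colour]; split_ifs <;> omega
  rw [colourCount, Fin.sum_univ_eq_sum_range (fun k => Finsupp.single (colour k) 1), add_comm,
    sum_range_add]
  simp only [htail, sum_const, card_range, Finsupp.smul_single, smul_eq_mul, mul_one,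
    sum_range_succ, sum_range_zero]
  ext c
  fin_cases c <;> simp [colour]
  omega

theorem colourCount_colour_pair_ne {m : ℕ} (i : Fin (m + 6)) :
    colourCount (fun j : Fin (m + 6) => colour j) {i, i + 1}
      ≠ Finsupp.single 0 1 + Finsupp.single 1 1 := by
  rw [colourCount_pair, Ne, Finsupp.single_add_single_eq_single_add_single one_ne_zero one_ne_zero,
    Fin.val_add_one]
  simp only [colour, Fin.ext_iff, Fin.val_last]
  split_ifs <;> simp_all

end Colouring

/-- For n ≥ 6 (written n = m + 6), specialize the vertex spanning polynomial of Cₙ,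
`P = Σ_i Π_{j ∉ {i, i+1}} x_j`, via the 3-coloring `f` with `f 1 = f 2 = 1`,
`f 4 = f 5 = 2`, `f k = 3` otherwise (written 0-indexed).  The resulting polynomial
`Q(y₁, y₂, y₃)` has the monomials `y₁² y₃^(n-4)` and `y₂² y₃^(n-4)` with nonzero
coefficients, but the coefficient of `y₁ y₂ y₃^(n-4)` vanishes; hence the Newton
polytope of `Q` is not saturated. -/
theorem stmt19 (m : ℕ) :
    ∀ Q : MvPolynomial (Fin 3) ℝ,
      Q = MvPolynomial.aeval
            (fun i : Fin (m + 6) =>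
              if i.val = 0 ∨ i.val = 1 then (X 0 : MvPolynomial (Fin 3) ℝ)
              else if i.val = 3 ∨ i.val = 4 then X 1
              else X 2)
            (∑ i : Fin (m + 6), ∏ j ∈ ({i, i + 1}ᶜ : Finset (Fin (m + 6))),
              (X j : MvPolynomial (Fin (m + 6)) ℝ)) →
      Q.coeff (Finsupp.single 0 2 + Finsupp.single 2 (m + 2)) ≠ 0 ∧
      Q.coeff (Finsupp.single 1 2 + Finsupp.single 2 (m + 2)) ≠ 0 ∧
      Q.coeff (Finsupp.single 0 1 + Finsupp.single 1 1 + Finsupp.single 2 (m + 2)) = 0 := by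
  intro Q hQ
  have hQ' : Q = rename (fun j : Fin (m + 6) => colour j) (cyclePolynomial ℝ (m + 6)) := by
    rw [hQ, rename_eq_aeval]
    congr 2 with j
    simp only [Function.comp, colour, apply_ite X]
  simp only [hQ', coeff_rename_cyclePolynomial, colourCount_colour_univ, Nat.cast_ne_zero,
    Nat.cast_eq_zero, card_eq_zero, card_ne_zero, filter_eq_empty_iff]
  refine ⟨⟨3, ?_⟩, ⟨0, ?_⟩, fun i _ h => ?_⟩
  · have hcolours : colour ↑(3 : Fin (m + 6)) = 1 ∧ colour ↑(3 + 1 : Fin (m + 6)) = 1 := by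
      simp [colour, Fin.val_add, Nat.mod_eq_of_lt]
    simp only [mem_filter, mem_univ, true_and, colourCount_pair, hcolours, ← Finsupp.single_add]
    abel
  · have hcolours : colour ↑(0 : Fin (m + 6)) = 0 ∧ colour ↑(0 + 1 : Fin (m + 6)) = 0 := by
      simp [colour, Nat.mod_eq_of_lt]
    simp only [mem_filter, mem_univ, true_and, colourCount_pair, hcolours, ← Finsupp.single_add]
    abel
  · have htotal : (Finsupp.single 0 2 + Finsupp.single 1 2 + Finsupp.single 2 (m + 2) : Fin 3 →₀ ℕ)
        = Finsupp.single 0 1 + Finsupp.single 1 1 + Finsupp.single 2 (m + 2)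
          + (Finsupp.single 0 1 + Finsupp.single 1 1) := by
      ext c
      fin_cases c <;> simp
    rw [htotal, add_right_inj] at h
    exact colourCount_colour_pair_ne i h
end
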